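/- arXiv:2211.10703 — 2 statements merged into one kernel-verified Lean document; each statement's English description precedes it below -/
import Mathlib

section
/- Let $\mathcal{H}_u$ be a real separable Hilbert space, $H : \mathcal{H}_u \to \mathbb{R}^{N_d}$ a bounded linear operator, $\tau > 0$, $d \in \mathbb{R}^{N_d}$, and $\Phi(v,\lambda) = (\tau/2)\lVert d - \lambda Hv\rVert^2$. Let $\mu_0^v$ be a Gaussian measure on $\mathcal{H}_u$ with mean zero and covariance a positive self-adjoint trace-class operator $\mathcal{C}_0$, and let $\mu_0^\lambda$ be the Gaussian measure $\mathcal{N}(\bar{\lambda}, \sigma)$ on $\mathbb{R}$. Let $\nu^v$ and $\nu^\lambda$ be probability measures with $d\nu^v/d\mu_0^v \propto \exp(-\Phi_v)$ and $d\nu^\lambda/d\mu_0^\lambda \propto \exp(-\Phi_\lambda)$, where $\sup_{1/N \le \lVert v\rVert_{\mathcal{H}_u} \le N} \Phi_v(v) < \infty$ for all $N>0$, $\int_{\mathcal{H}_u} e^{-\Phi_v(v)} \max(1, \lVert v\rVert_{\mathcal{H}_u}^2)\,\mu_0^v(dv) < \infty$, $\sup_{|\lambda| \le N} \Phi_\lambda(\lambda)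 < \infty$ for all $N>0$, and $\int_{\mathbb{R}} e^{-\Phi_\lambda(\lambda)} \max(1, \lambda^2)\,\mu_0^\lambda(d\lambda) < \infty$. Then: (i) for every $N > 0$, $\sup_{v : 1/N \le \lVert v\rVert_{\mathcal{H}_u} \le N} \int_{\mathbb{R}} \Phi(v,\lambda)\,\nu^\lambda(d\lambda) < \infty$; (ii) for every $N > 0$, $\sup_{\lambda : |\lambda| \le N} \int_{\mathcal{H}_u} \Phi(v,\lambda)\,\nu^v(dv) < \infty$; (iii) $\int_{\mathcal{H}_u} \exp\big(-\int_{\mathbb{R}} \Phi(v,\lambda)\,\nu^\lambda(d\lambda)\big) \max(1, \lVert v\rVert_{\mathcal{H}_u}^2)\,\mu_0^v(dv) < \infty$; and (iv) $\int_{\mathbb{R}} \exp\big(-\int_{\mathcal{H}_u} \Phi(v,\lambda)\,\nu^v(dv)\big) \max(1, \lambda^2)\,\mu_0^\lambda(d\lambda) < \infty$. -/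
open MeasureTheory ProbabilityTheory Real
open scoped ENNReal NNReal RealInnerProductSpace

/-!
Since `Φ(v, λ) ≤ τ (‖d‖² + ‖H‖² λ² ‖v‖²)`, for `v` (resp. `λ`) in a bounded set the potential is
dominated by a constant times `max(1, λ²)` (resp. `max(1, ‖v‖²)`); these weights are integrable
under `ν^λ` (resp. `νᵛ`) precisely by the `R²` conditions on `Φ_λ` and `Φ_v`. For (iii) and (iv),
`Φ ≥ 0` makes the exponential factor at most `1`, and the remaining weight has finite integral
under the Gaussian priors, which have finite second moments (Fernique).
-/

noncomputable def gibbsMeasure {α : Type*} [MeasurableSpace α] (μ : Measure α) (Ψ : α → ℝ) :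
    Measure α :=
  (∫⁻ a, ENNReal.ofReal (Real.exp (-Ψ a)) ∂μ)⁻¹ •
    μ.withDensity fun a => ENNReal.ofReal (Real.exp (-Ψ a))

section Integrability

variable {α : Type*} [MeasurableSpace α] {μ : Measure α}

theorem lintegral_withDensity_le_lintegral_mul_of_sFinite [SFinite μ] (f g : α → ℝ≥0∞) :
    ∫⁻ a, g a ∂μ.withDensity f ≤ ∫⁻ a, f a * g a ∂μ := by
  obtain ⟨f', hf'_meas, hf'_le, hf'_eq⟩ := exists_measurable_le_withDensity_eq μ f
  calc ∫⁻ a, g a ∂μ.withDensity f = ∫⁻ a, g a ∂μ.withDensity f' := by rw [hf'_eq]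
    _ ≤ ∫⁻ a, (f' * g) a ∂μ := lintegral_withDensity_le_lintegral_mul μ hf'_meas g
    _ ≤ ∫⁻ a, f a * g a ∂μ := lintegral_mono fun a => mul_le_mul_left (hf'_le a) _

theorem integrable_gibbsMeasure [SFinite μ] {Ψ w : α → ℝ} (hw : Measurable w)
    (hw_nonneg : ∀ a, 0 ≤ w a)
    (h : ∫⁻ a, ENNReal.ofReal (Real.exp (-Ψ a) * w a) ∂μ < ⊤) :
    Integrable w (gibbsMeasure μ Ψ) := by
  refine ⟨hw.aestronglyMeasurable, ?_⟩
  set f := fun a => ENNReal.ofReal (Real.exp (-Ψ a))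
  rcases eq_or_ne (∫⁻ a, f a ∂μ) 0 with hZ | hZ
  · -- the normalising factor is `0⁻¹ = ∞`, but it multiplies the zero measure
    have hzero : μ.withDensity f = 0 := by
      rw [← Measure.measure_univ_eq_zero, withDensity_apply _ MeasurableSet.univ,
        Measure.restrict_univ, hZ]
    simp [HasFiniteIntegral, gibbsMeasure, f, hzero]
  · have hfw : ∫⁻ a, f a * ‖w a‖ₑ ∂μ < ⊤ := by
      simpa [f, Real.enorm_eq_ofReal (hw_nonneg _), ENNReal.ofReal_mul (Real.exp_nonneg _)]
        using h
    rw [HasFiniteIntegral, gibbsMeasure, lintegral_smul_measure]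
    exact ENNReal.mul_lt_top (ENNReal.inv_lt_top.2 (pos_iff_ne_zero.2 hZ))
      ((lintegral_withDensity_le_lintegral_mul_of_sFinite f _).trans_lt hfw)

theorem integral_le_mul_integral_of_le {F w : α → ℝ} (hF : ∀ a, 0 ≤ F a) (hw : Integrable w μ)
    {K : ℝ} (hFw : ∀ a, F a ≤ K * w a) : ∫ a, F a ∂μ ≤ K * ∫ a, w a ∂μ := by
  rw [← integral_const_mul]
  exact integral_mono_of_nonneg (ae_of_all _ hF) (hw.const_mul K) (ae_of_all _ hFw)

theorem lintegral_ofReal_exp_neg_mul_lt_top {F w : α → ℝ} (hF : ∀ a, 0 ≤ F a)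
    (hw : Integrable w μ) : ∫⁻ a, ENNReal.ofReal (Real.exp (-F a) * w a) ∂μ < ⊤ := by
  refine lt_of_le_of_lt (lintegral_mono fun a => ?_) hw.2
  rw [Real.enorm_eq_ofReal_abs]
  refine ENNReal.ofReal_le_ofReal ?_
  calc Real.exp (-F a) * w a ≤ Real.exp (-F a) * |w a| := by gcongr; exact le_abs_self _
    _ ≤ |w a| := mul_le_of_le_one_left (abs_nonneg _) (Real.exp_le_one_iff.2 (by simpa using hF a))

end Integrability

theorem IsGaussian.integrable_max_one_norm_sq {E : Type*} [NormedAddCommGroup E]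
    [NormedSpace ℝ E] [MeasurableSpace E] [BorelSpace E] [CompleteSpace E] [SecondCountableTopology E]
    (μ : Measure E) [IsGaussian μ] : Integrable (fun x => max 1 (‖x‖ ^ 2)) μ :=
  (integrable_const 1).sup (IsGaussian.memLp_two_id.integrable_norm_pow' (f := id))

theorem norm_sub_smul_apply_sq_le {E F : Type*} [SeminormedAddCommGroup E] [NormedSpace ℝ E]
    [SeminormedAddCommGroup F] [NormedSpace ℝ F] (H : E →L[ℝ] F) (d : F) (v : E) (t : ℝ) :
    ‖d - t • H v‖ ^ 2 ≤ 2 * (‖d‖ ^ 2 + ‖H‖ ^ 2 * (t ^ 2 * ‖v‖ ^ 2)) := by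
  have h : ‖d - t • H v‖ ≤ ‖d‖ + |t| * (‖H‖ * ‖v‖) := by
    refine (norm_sub_le _ _).trans ?_
    rw [norm_smul, Real.norm_eq_abs]
    gcongr
    exact H.le_opNorm v
  calc ‖d - t • H v‖ ^ 2 ≤ (‖d‖ + |t| * (‖H‖ * ‖v‖)) ^ 2 := by gcongr
    _ ≤ 2 * (‖d‖ ^ 2 + (|t| * (‖H‖ * ‖v‖)) ^ 2) := add_sq_le
    _ = 2 * (‖d‖ ^ 2 + ‖H‖ ^ 2 * (t ^ 2 * ‖v‖ ^ 2)) := by rw [mul_pow, sq_abs]; ring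

theorem add_mul_mul_le_mul_max_one {a b x X y : ℝ} (ha : 0 ≤ a) (hb : 0 ≤ b) (hx : 0 ≤ x)
    (hxX : x ≤ X) : a + b * (x * y) ≤ (a + b * X) * max 1 y := by
  have h1 : 1 ≤ max 1 y := le_max_left _ _
  have hy' : y ≤ max 1 y := le_max_right _ _
  have : x * y ≤ X * max 1 y := by nlinarith
  nlinarith

theorem stmt5_general
    {Hu : Type*} [NormedAddCommGroup Hu] [InnerProductSpace ℝ Hu]
    [CompleteSpace Hu] [TopologicalSpace.SeparableSpace Hu]
    [MeasurableSpace Hu] [BorelSpace Hu]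
    (Nd : ℕ)
    (H : Hu →L[ℝ] EuclideanSpace ℝ (Fin Nd))
    (τ : ℝ) (hτ : 0 < τ) (d : EuclideanSpace ℝ (Fin Nd))
    (Φ : Hu → ℝ → ℝ)
    (hΦ : ∀ (v : Hu) (lam : ℝ), Φ v lam = τ / 2 * ‖d - lam • H v‖ ^ 2)
    -- the prior on `v`: a centered Gaussian with trace-class covariance `C₀`
    (μ0v : Measure Hu)
    (hGauss : ∀ L : Hu →L[ℝ] ℝ, ∃ s : ℝ≥0, μ0v.map L = gaussianReal 0 s)
    -- the prior on `λ`: the Gaussian `N(λ̄, σ)` on `ℝ`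
    (lamBar : ℝ) (σ : ℝ≥0)
    (μ0lam : Measure ℝ) (hμ0lam : μ0lam = gaussianReal lamBar σ)
    -- the approximating measures `νᵛ` and `ν^λ`
    (Φv : Hu → ℝ) (Φlam : ℝ → ℝ)
    (νv : Measure Hu)
    (νlam : Measure ℝ)
    (hνv : νv = (∫⁻ v, ENNReal.ofReal (Real.exp (-Φv v)) ∂μ0v)⁻¹ •
      μ0v.withDensity fun v => ENNReal.ofReal (Real.exp (-Φv v)))
    (hνlam : νlam = (∫⁻ l, ENNReal.ofReal (Real.exp (-Φlam l)) ∂μ0lam)⁻¹ •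
      μ0lam.withDensity fun l => ENNReal.ofReal (Real.exp (-Φlam l)))
    -- `Φ_v ∈ R¹_v ∩ R²_v` and `Φ_λ ∈ R¹_λ ∩ R²_λ`
    (hΦv2 : (∫⁻ v, ENNReal.ofReal (Real.exp (-Φv v) * max 1 (‖v‖ ^ 2)) ∂μ0v) < ⊤)
    (hΦlam2 : (∫⁻ l, ENNReal.ofReal (Real.exp (-Φlam l) * max 1 (l ^ 2)) ∂μ0lam) < ⊤) :
    -- (i)  T₁ < ∞
    (∀ N : ℝ, 0 < N → ∃ C : ℝ, ∀ v : Hu, 1 / N ≤ ‖v‖ → ‖v‖ ≤ N →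
      (∫ l, Φ v l ∂νlam) ≤ C) ∧
    -- (ii) T₂ < ∞
    (∀ N : ℝ, 0 < N → ∃ C : ℝ, ∀ l : ℝ, |l| ≤ N →
      (∫ v, Φ v l ∂νv) ≤ C) ∧
    -- (iii) T₃ < ∞
    ((∫⁻ v, ENNReal.ofReal (Real.exp (-(∫ l, Φ v l ∂νlam)) * max 1 (‖v‖ ^ 2)) ∂μ0v) < ⊤) ∧
    -- (iv) T₄ < ∞
    ((∫⁻ l, ENNReal.ofReal (Real.exp (-(∫ v, Φ v l ∂νv)) * max 1 (l ^ 2)) ∂μ0lam) < ⊤) := by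
  subst hμ0lam
  have : IsGaussian μ0v := isGaussian_of_map_eq_gaussianReal fun L => ⟨0, hGauss L⟩
  have hΦ_nonneg : ∀ v l, 0 ≤ Φ v l := fun v l => by rw [hΦ]; positivity
  have hΦ_le : ∀ v l, Φ v l ≤ τ * ‖d‖ ^ 2 + τ * ‖H‖ ^ 2 * (l ^ 2 * ‖v‖ ^ 2) := fun v l => by
    rw [hΦ]; nlinarith [norm_sub_smul_apply_sq_le H d v l]
  have hνlam_int : Integrable (fun l : ℝ => max 1 (l ^ 2)) νlam := hνlam ▸
    integrable_gibbsMeasure (by fun_prop) (fun _ => le_max_of_le_left zero_le_one) hΦlam2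
  have hνv_int : Integrable (fun v : Hu => max 1 (‖v‖ ^ 2)) νv := hνv ▸
    integrable_gibbsMeasure (by fun_prop) (fun _ => le_max_of_le_left zero_le_one) hΦv2
  refine ⟨fun N _ => ⟨(τ * ‖d‖ ^ 2 + τ * ‖H‖ ^ 2 * N ^ 2) * ∫ l, max 1 (l ^ 2) ∂νlam,
      fun v _ hvN => integral_le_mul_integral_of_le (hΦ_nonneg v) hνlam_int fun l => ?_⟩,
    fun N _ => ⟨(τ * ‖d‖ ^ 2 + τ * ‖H‖ ^ 2 * N ^ 2) * ∫ v, max 1 (‖v‖ ^ 2) ∂νv,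
      fun l hlN => integral_le_mul_integral_of_le (hΦ_nonneg · l) hνv_int fun v => ?_⟩,
    lintegral_ofReal_exp_neg_mul_lt_top (fun v => integral_nonneg (hΦ_nonneg v))
      (IsGaussian.integrable_max_one_norm_sq μ0v),
    lintegral_ofReal_exp_neg_mul_lt_top (fun l => integral_nonneg (hΦ_nonneg · l))
      (by simpa using IsGaussian.integrable_max_one_norm_sq (gaussianReal lamBar σ))⟩
  · have hv : ‖v‖ ^ 2 ≤ N ^ 2 := pow_le_pow_left₀ (norm_nonneg v) hvN 2
    calc Φ v l ≤ τ * ‖d‖ ^ 2 + τ * ‖H‖ ^ 2 * (‖v‖ ^ 2 * l ^ 2) := by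
          rw [mul_comm (‖v‖ ^ 2)]; exact hΦ_le v l
      _ ≤ _ := add_mul_mul_le_mul_max_one (by positivity) (by positivity) (sq_nonneg _) hv
  · have hl : l ^ 2 ≤ N ^ 2 := by simpa using pow_le_pow_left₀ (abs_nonneg l) hlN 2
    exact (hΦ_le v l).trans
      (add_mul_mul_le_mul_max_one (by positivity) (by positivity) (sq_nonneg _) hl)

/-- Verification of the conditions `T₁, T₂, T₃, T₄` of Assumption 1 for the
NCP potential `Φ(v,λ) = (τ/2)‖d - λ H v‖²`, a centered Gaussian prior `μ₀ᵛ` on `𝓗_u` with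
positive self-adjoint trace-class covariance `C₀`, a Gaussian prior `N(λ̄, σ)` on `ℝ`, and
approximating measures `νᵛ ∝ e^{-Φ_v} μ₀ᵛ`, `ν^λ ∝ e^{-Φ_λ} μ₀^λ` whose potentials lie in
`R¹ ∩ R²`. -/
theorem stmt5
    {Hu : Type*} [NormedAddCommGroup Hu] [InnerProductSpace ℝ Hu]
    [CompleteSpace Hu] [TopologicalSpace.SeparableSpace Hu]
    [MeasurableSpace Hu] [BorelSpace Hu]
    (Nd : ℕ) (hNd : 0 < Nd)
    (H : Hu →L[ℝ] EuclideanSpace ℝ (Fin Nd))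
    (τ : ℝ) (hτ : 0 < τ) (d : EuclideanSpace ℝ (Fin Nd))
    (Φ : Hu → ℝ → ℝ)
    (hΦ : ∀ (v : Hu) (lam : ℝ), Φ v lam = τ / 2 * ‖d - lam • H v‖ ^ 2)
    -- the prior on `v`: a centered Gaussian with trace-class covariance `C₀`
    (μ0v : Measure Hu) [IsProbabilityMeasure μ0v]
    (hGauss : ∀ L : Hu →L[ℝ] ℝ, ∃ s : ℝ≥0, μ0v.map L = gaussianReal 0 s)
    (C0 : Hu →L[ℝ] Hu)
    (hC0sa : ∀ x y : Hu, ⟪C0 x, y⟫ = ⟪x, C0 y⟫)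
    (hC0pos : ∀ x : Hu, 0 ≤ ⟪C0 x, x⟫)
    (hC0tc : ∀ e : HilbertBasis ℕ ℝ Hu, Summable fun k => ⟪C0 (e k), e k⟫)
    (hC0cov : ∀ x y : Hu, (∫ v, ⟪v, x⟫ * ⟪v, y⟫ ∂μ0v) = ⟪C0 x, y⟫)
    -- the prior on `λ`: the Gaussian `N(λ̄, σ)` on `ℝ`
    (lamBar : ℝ) (σ : ℝ≥0) (hσ : 0 < σ)
    (μ0lam : Measure ℝ) (hμ0lam : μ0lam = gaussianReal lamBar σ)
    -- the approximating measures `νᵛ` and `ν^λ`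
    (Φv : Hu → ℝ) (Φlam : ℝ → ℝ)
    (νv : Measure Hu) [IsProbabilityMeasure νv]
    (νlam : Measure ℝ) [IsProbabilityMeasure νlam]
    (hνv : νv = (∫⁻ v, ENNReal.ofReal (Real.exp (-Φv v)) ∂μ0v)⁻¹ •
      μ0v.withDensity fun v => ENNReal.ofReal (Real.exp (-Φv v)))
    (hνlam : νlam = (∫⁻ l, ENNReal.ofReal (Real.exp (-Φlam l)) ∂μ0lam)⁻¹ •
      μ0lam.withDensity fun l => ENNReal.ofReal (Real.exp (-Φlam l)))
    -- `Φ_v ∈ R¹_v ∩ R²_v` and `Φ_λ ∈ R¹_λ ∩ R²_λ`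
    (hΦv1 : ∀ N : ℝ, 0 < N → ∃ C : ℝ, ∀ v : Hu, 1 / N ≤ ‖v‖ → ‖v‖ ≤ N → Φv v ≤ C)
    (hΦv2 : (∫⁻ v, ENNReal.ofReal (Real.exp (-Φv v) * max 1 (‖v‖ ^ 2)) ∂μ0v) < ⊤)
    (hΦlam1 : ∀ N : ℝ, 0 < N → ∃ C : ℝ, ∀ l : ℝ, |l| ≤ N → Φlam l ≤ C)
    (hΦlam2 : (∫⁻ l, ENNReal.ofReal (Real.exp (-Φlam l) * max 1 (l ^ 2)) ∂μ0lam) < ⊤) :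
    -- (i)  T₁ < ∞
    (∀ N : ℝ, 0 < N → ∃ C : ℝ, ∀ v : Hu, 1 / N ≤ ‖v‖ → ‖v‖ ≤ N →
      (∫ l, Φ v l ∂νlam) ≤ C) ∧
    -- (ii) T₂ < ∞
    (∀ N : ℝ, 0 < N → ∃ C : ℝ, ∀ l : ℝ, |l| ≤ N →
      (∫ v, Φ v l ∂νv) ≤ C) ∧
    -- (iii) T₃ < ∞
    ((∫⁻ v, ENNReal.ofReal (Real.exp (-(∫ l, Φ v l ∂νlam)) * max 1 (‖v‖ ^ 2)) ∂μ0v) < ⊤) ∧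
    -- (iv) T₄ < ∞
    ((∫⁻ l, ENNReal.ofReal (Real.exp (-(∫ v, Φ v l ∂νv)) * max 1 (l ^ 2)) ∂μ0lam) < ⊤) :=
  stmt5_general Nd H τ hτ d Φ hΦ μ0v hGauss lamBar σ μ0lam hμ0lam Φv Φlam νv νlam hνv hνlam hΦv2
    hΦlam2
end

section
/- Let $n, N_d$ be positive integers, $\Sigma$ an $n \times n$ real symmetric positive-definite matrix, $H$ an $N_d \times n$ real matrix, $d \in \mathbb{R}^{N_d}$, $\tau > 0$, and let $p_\lambda$ be the density of $\mathcal{N}(\bar\lambda, \sigma)$ on $\mathbb{R}$. Define the NCP posterior probability measure $\mu^N$ on $\mathbb{R}^n \times \mathbb{R}$ with Lebesgue density proportional to $\exp(-(\tau/2)\lVert d - \lambda H v\rVert^2)\,\varphi_\Sigma(v)\,p_\lambda(\lambda)$, where $\varphi_\Sigma$ is the density of $\mathcal{N}(0,\Sigma)$, and the CP posterior probability measure $\widetilde{\mu}^N$ on $\mathbb{R}^n \times \mathbb{R}$ with Lebesgue density proportional to $\exp(-(\tau/2)\lVert H u - d\rVert^2)\,\varphi_{\lambda^2\Sigma}(u)\,p_\lambda(\lambda)$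 (defined for $\lambda \ne 0$; the set $\{\lambda = 0\}$ is null). Then the pushforward of $\mu^N$ under the map $(v,\lambda) \mapsto (\lambda v, \lambda)$ equals $\widetilde{\mu}^N$. -/
open MeasureTheory ProbabilityTheory Real Matrix
open scoped ENNReal NNReal

/-!
On each fibre `λ ≠ 0` the substitution `u = λ v` multiplies Lebesgue measure on `ℝⁿ` by `|λ|ⁿ`,
while `‖H (λ v) - d‖ = ‖d - λ H v‖` and `|λ|ⁿ φ_{λ²Σ}(λ v) = φ_Σ(v)`. Hence the NCP density is
`|λ|ⁿ` times the CP density composed with `(v, λ) ↦ (λ v, λ)`, so by Fubini this map pushes the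
unnormalised NCP measure onto the unnormalised CP one; in particular the normalising constants
agree. The fibre `λ = 0` is null and plays no role.
-/

/-- The density `φ_Σ(v) = (2π)^{-n/2} det(Σ)^{-1/2} exp(-½ vᵀ Σ⁻¹ v)` of the Gaussian
`N(0, Σ)` on `ℝⁿ`. -/
noncomputable def gaussDensityFin (n : ℕ) (S : Matrix (Fin n) (Fin n) ℝ)
    (v : Fin n → ℝ) : ℝ :=
  (2 * π) ^ (-(n : ℝ) / 2) * S.det ^ (-(1 : ℝ) / 2) *
    Real.exp (-(1 / 2) * (v ⬝ᵥ S⁻¹ *ᵥ v))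

section HaarScaling

variable {E : Type*} [NormedAddCommGroup E] [NormedSpace ℝ E] [MeasurableSpace E] [BorelSpace E]
  [FiniteDimensional ℝ E] (μ : Measure E) [μ.IsAddHaarMeasure]

open Module

theorem lintegral_comp_smul_of_ne_zero (f : E → ℝ≥0∞) {r : ℝ} (hr : r ≠ 0) :
    ∫⁻ x, f (r • x) ∂μ = ENNReal.ofReal |(r ^ finrank ℝ E)⁻¹| * ∫⁻ x, f x ∂μ := by
  rw [← smul_eq_mul, ← lintegral_smul_measure, ← Measure.map_addHaar_smul μ hr]
  exact (lintegral_map_equiv f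
    (Homeomorph.smul (isUnit_iff_ne_zero.2 hr).unit).toMeasurableEquiv).symm

theorem lintegral_abs_pow_mul_comp_smul_prod (f : E × ℝ → ℝ≥0∞) (hf : Measurable f) :
    ∫⁻ p, ENNReal.ofReal (|p.2| ^ finrank ℝ E) * f (p.2 • p.1, p.2) ∂(μ.prod volume) =
      ∫⁻ p, f p ∂(μ.prod volume) := by
  rw [lintegral_prod_symm _ (by fun_prop), lintegral_prod_symm _ hf.aemeasurable]
  refine lintegral_congr_ae ?_
  filter_upwards [Measure.ae_ne volume 0] with r hr
  have hcancel :
      ENNReal.ofReal (|r| ^ finrank ℝ E) * ENNReal.ofReal |(r ^ finrank ℝ E)⁻¹| = 1 := by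
    rw [← ENNReal.ofReal_mul (by positivity), abs_inv, abs_pow,
      mul_inv_cancel₀ (pow_ne_zero _ (abs_ne_zero.2 hr)), ENNReal.ofReal_one]
  rw [lintegral_const_mul' _ _ ENNReal.ofReal_ne_top,
    lintegral_comp_smul_of_ne_zero μ (fun x => f (x, r)) hr, ← mul_assoc, hcancel, one_mul]

theorem map_smul_prod_withDensity (g : E × ℝ → ℝ≥0∞) (hg : Measurable g) :
    ((μ.prod volume).withDensity fun p =>
        ENNReal.ofReal (|p.2| ^ finrank ℝ E) * g (p.2 • p.1, p.2)).map
      (fun p => (p.2 • p.1, p.2)) = (μ.prod volume).withDensity g := by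
  have hT : Measurable fun p : E × ℝ => (p.2 • p.1, p.2) := by fun_prop
  ext s hs
  rw [Measure.map_apply hT hs, withDensity_apply _ (hT hs), withDensity_apply _ hs,
    ← lintegral_indicator (hT hs), ← lintegral_indicator hs,
    ← lintegral_abs_pow_mul_comp_smul_prod μ _ (hg.indicator hs)]
  congr 1
  funext p
  by_cases hp : (p.2 • p.1, p.2) ∈ s <;> simp [Set.indicator, hp]

theorem map_smul_prod_withDensity_ofReal {f g : E × ℝ → ℝ} (hg : Measurable g)
    (hfg : ∀ v r, r ≠ 0 → f (v, r) = |r| ^ finrank ℝ E * g (r • v, r)) :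
    ((μ.prod volume).withDensity fun p => ENNReal.ofReal (f p)).map
      (fun p => (p.2 • p.1, p.2)) = (μ.prod volume).withDensity fun p => ENNReal.ofReal (g p) := by
  have hfg_ae : (fun p => ENNReal.ofReal (f p)) =ᵐ[μ.prod volume] fun p =>
      ENNReal.ofReal (|p.2| ^ finrank ℝ E) * ENNReal.ofReal (g (p.2 • p.1, p.2)) := by
    filter_upwards [Measure.quasiMeasurePreserving_snd.ae (Measure.ae_ne volume 0)] with p hp
    rw [← ENNReal.ofReal_mul (by positivity), ← hfg _ _ hp]
  rw [withDensity_congr_ae hfg_ae, map_smul_prod_withDensity μ _ hg.ennreal_ofReal]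

end HaarScaling

theorem measurable_of_eq_abs_pow_mul_comp_smul {E : Type*} [AddCommGroup E] [Module ℝ E]
    [MeasurableSpace E] [MeasurableSMul₂ ℝ E] {f g : E × ℝ → ℝ} (hf : Measurable f) (k : ℕ)
    (hfg : ∀ v r, r ≠ 0 → f (v, r) = |r| ^ k * g (r • v, r)) (hg0 : ∀ u, g (u, 0) = 0) :
    Measurable g := by
  have hg : g = fun p => if p.2 = 0 then 0 else (|p.2| ^ k)⁻¹ * f (p.2⁻¹ • p.1, p.2) := by
    funext ⟨u, r⟩
    rcases eq_or_ne r 0 with rfl | hr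
    · simp [hg0]
    · rw [if_neg hr, hfg _ _ hr, smul_inv_smul₀ hr]
      field_simp
  rw [hg]
  exact Measurable.ite (measurable_snd (measurableSet_singleton 0)) measurable_const (by fun_prop)

theorem abs_pow_mul_gaussDensityFin_sq_smul {n : ℕ} {S : Matrix (Fin n) (Fin n) ℝ}
    (hS : 0 < S.det) {r : ℝ} (hr : r ≠ 0) (v : Fin n → ℝ) :
    |r| ^ n * gaussDensityFin n (r ^ 2 • S) (r • v) = gaussDensityFin n S v := by
  have hr2 : r ^ 2 ≠ 0 := pow_ne_zero 2 hr
  have hdet : (r ^ 2 • S).det ^ (-(1 : ℝ) / 2) = (|r| ^ n)⁻¹ * S.det ^ (-(1 : ℝ) / 2) := by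
    rw [det_smul, Fintype.card_fin, Real.mul_rpow (by positivity) hS.le, ← sq_abs, ← pow_mul,
      ← Real.rpow_natCast, ← Real.rpow_mul (abs_nonneg r), ← Real.rpow_neg_one,
      ← Real.rpow_natCast, ← Real.rpow_mul (abs_nonneg r)]
    congr 2
    push_cast
    ring
  have hinv : (r ^ 2 • S)⁻¹ = (r ^ 2)⁻¹ • S⁻¹ := by
    have := inv_smul' S (Units.mk0 _ hr2) (isUnit_iff_ne_zero.2 hS.ne')
    simpa [Units.smul_def] using this
  have hquad : (r • v) ⬝ᵥ (r ^ 2 • S)⁻¹ *ᵥ (r • v) = v ⬝ᵥ S⁻¹ *ᵥ v := by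
    rw [hinv, smul_mulVec, mulVec_smul, smul_dotProduct, dotProduct_smul, dotProduct_smul,
      smul_smul, smul_smul, smul_eq_mul]
    field_simp
  unfold gaussDensityFin
  rw [hdet, hquad]
  field_simp

theorem continuous_gaussDensityFin (n : ℕ) (S : Matrix (Fin n) (Fin n) ℝ) :
    Continuous (gaussDensityFin n S) := by
  unfold gaussDensityFin
  fun_prop

theorem stmt7_general
    (n Nd : ℕ)
    (S : Matrix (Fin n) (Fin n) ℝ) (hS : S.PosDef)
    (H : Matrix (Fin Nd) (Fin n) ℝ)
    (d : Fin Nd → ℝ) (τ : ℝ)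
    (lamBar : ℝ) (σ : ℝ≥0)
    -- the NCP unnormalized density and posterior measure
    (q : (Fin n → ℝ) × ℝ → ℝ)
    (hq : ∀ (v : Fin n → ℝ) (lam : ℝ),
      q (v, lam) = Real.exp (-(τ / 2) * ∑ i, (d i - lam * (H *ᵥ v) i) ^ 2) *
        gaussDensityFin n S v * gaussianPDFReal lamBar σ lam)
    (μN : Measure ((Fin n → ℝ) × ℝ))
    (hμN : μN = (∫⁻ p, ENNReal.ofReal (q p))⁻¹ •
      volume.withDensity fun p => ENNReal.ofReal (q p))
    -- the CP unnormalized density (defined for `λ ≠ 0`; the set `{λ = 0}` is null)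
    (tq : (Fin n → ℝ) × ℝ → ℝ)
    (htq : ∀ (u : Fin n → ℝ) (lam : ℝ), lam ≠ 0 →
      tq (u, lam) = Real.exp (-(τ / 2) * ∑ i, ((H *ᵥ u) i - d i) ^ 2) *
        gaussDensityFin n (lam ^ 2 • S) u * gaussianPDFReal lamBar σ lam)
    (htq0 : ∀ u : Fin n → ℝ, tq (u, 0) = 0)
    (μtN : Measure ((Fin n → ℝ) × ℝ))
    (hμtN : μtN = (∫⁻ p, ENNReal.ofReal (tq p))⁻¹ •
      volume.withDensity fun p => ENNReal.ofReal (tq p)) :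
    μN.map (fun p : (Fin n → ℝ) × ℝ => (p.2 • p.1, p.2)) = μtN := by
  have hscale : ∀ v lam, lam ≠ 0 → q (v, lam) = |lam| ^ n * tq (lam • v, lam) := by
    intro v lam hlam
    have hsum : ∑ i, ((H *ᵥ (lam • v)) i - d i) ^ 2 = ∑ i, (d i - lam * (H *ᵥ v) i) ^ 2 := by
      simp only [mulVec_smul, Pi.smul_apply, smul_eq_mul]
      exact Finset.sum_congr rfl fun i _ => by ring
    rw [hq, htq _ _ hlam, hsum, ← abs_pow_mul_gaussDensityFin_sq_smul hS.det_pos hlam v]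
    ring
  have hq_meas : Measurable q := by
    have := (continuous_gaussDensityFin n S).measurable
    have := measurable_gaussianPDFReal lamBar σ
    rw [show q = _ from funext fun p => hq p.1 p.2]
    fun_prop
  have hmap : (volume.withDensity fun p => ENNReal.ofReal (q p)).map
      (fun p : (Fin n → ℝ) × ℝ => (p.2 • p.1, p.2)) =
        volume.withDensity fun p => ENNReal.ofReal (tq p) := by
    rw [Measure.volume_eq_prod]
    refine map_smul_prod_withDensity_ofReal _
      (measurable_of_eq_abs_pow_mul_comp_smul hq_meas n hscale htq0) ?_
    simpa only [Module.finrank_fin_fun] using hscale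
  have hmass : ∫⁻ p, ENNReal.ofReal (q p) = ∫⁻ p, ENNReal.ofReal (tq p) := by
    have hT : Measurable fun p : (Fin n → ℝ) × ℝ => (p.2 • p.1, p.2) := by fun_prop
    simpa [Measure.map_apply hT MeasurableSet.univ] using congrArg (· Set.univ) hmap
  rw [hμN, hμtN, Measure.map_smul, hmap, hmass]

/-- The pushforward of the NCP posterior `μᴺ` (with Lebesgue density
proportional to `exp(-(τ/2)‖d - λ H v‖²) φ_Σ(v) p_λ(λ)`) under the reparameterization
`(v, λ) ↦ (λ v, λ)` equals the CP posterior `μ̃ᴺ` (with Lebesgue density proportional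
to `exp(-(τ/2)‖H u - d‖²) φ_{λ²Σ}(u) p_λ(λ)`, defined for `λ ≠ 0`). -/
theorem stmt7
    (n Nd : ℕ) (hn : 0 < n) (hNd : 0 < Nd)
    (S : Matrix (Fin n) (Fin n) ℝ) (hS : S.PosDef)
    (H : Matrix (Fin Nd) (Fin n) ℝ)
    (d : Fin Nd → ℝ) (τ : ℝ) (hτ : 0 < τ)
    (lamBar : ℝ) (σ : ℝ≥0) (hσ : 0 < σ)
    -- the NCP unnormalized density and posterior measure
    (q : (Fin n → ℝ) × ℝ → ℝ)
    (hq : ∀ (v : Fin n → ℝ) (lam : ℝ),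
      q (v, lam) = Real.exp (-(τ / 2) * ∑ i, (d i - lam * (H *ᵥ v) i) ^ 2) *
        gaussDensityFin n S v * gaussianPDFReal lamBar σ lam)
    (μN : Measure ((Fin n → ℝ) × ℝ))
    (hμN : μN = (∫⁻ p, ENNReal.ofReal (q p))⁻¹ •
      volume.withDensity fun p => ENNReal.ofReal (q p))
    -- the CP unnormalized density (defined for `λ ≠ 0`; the set `{λ = 0}` is null)
    (tq : (Fin n → ℝ) × ℝ → ℝ)
    (htq : ∀ (u : Fin n → ℝ) (lam : ℝ), lam ≠ 0 →
      tq (u, lam) = Real.exp (-(τ / 2) * ∑ i, ((H *ᵥ u) i - d i) ^ 2) *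
        gaussDensityFin n (lam ^ 2 • S) u * gaussianPDFReal lamBar σ lam)
    (htq0 : ∀ u : Fin n → ℝ, tq (u, 0) = 0)
    (μtN : Measure ((Fin n → ℝ) × ℝ))
    (hμtN : μtN = (∫⁻ p, ENNReal.ofReal (tq p))⁻¹ •
      volume.withDensity fun p => ENNReal.ofReal (tq p)) :
    μN.map (fun p : (Fin n → ℝ) × ℝ => (p.2 • p.1, p.2)) = μtN :=
  stmt7_general n Nd S hS H d τ lamBar σ q hq μN hμN tq htq htq0 μtN hμtN
end
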